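/- Let M be an affine algebraic monoid with unit group G and let H ⊆ G be a subgroup, closed in M. For every character γ ∈ X(H) there exists an extendible character ρ ∈ E_M(H) such that the product γρ is also extendible, i.e. γρ ∈ E_M(H). -/

import Mathlib

open MvPolynomial

namespace AlgebraicMonoid

variable (k : Type) [Field k] [IsAlgClosed k] (n : ℕ)

/-- `n × n` matrices over `k`: the ambient affine space for linear algebraic monoids. -/
abbrev Mat := Matrix (Fin n) (Fin n) k

/-- Polynomial functions on the space of `n × n` matrices. -/
abbrev MPoly := MvPolynomial (Fin n × Fin n) k

variable {k n}

/-- Evaluation of a polynomial at a matrix. -/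
noncomputable def mEval (x : Mat k n) (p : MPoly k n) : k :=
  eval (fun ij => x ij.1 ij.2) p

/-- The (regular function induced by) `p` vanishes identically on `X`. -/
def VanishesOn (X : Set (Mat k n)) (p : MPoly k n) : Prop :=
  ∀ x ∈ X, mEval x p = 0

/-- Zariski closed subsets of matrix space. -/
def ZClosed (X : Set (Mat k n)) : Prop :=
  ∃ S : Set (MPoly k n), X = {x | ∀ p ∈ S, mEval x p = 0}

/-- An affine (linear) algebraic monoid, realized as a Zariski closed submonoid of
matrix space (every affine algebraic monoid admits such a closed embedding). -/
structure IsAlgMonoid (M : Set (Mat k n)) : Prop where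
  zclosed : ZClosed M
  one_mem : (1 : Mat k n) ∈ M
  mul_mem : ∀ a ∈ M, ∀ b ∈ M, a * b ∈ M

/-- The unit group `G(M)` of the monoid `M`. -/
def unitGroup (M : Set (Mat k n)) : Set (Mat k n) :=
  {g | g ∈ M ∧ ∃ h ∈ M, g * h = 1 ∧ h * g = 1}

/-- `H` is an (abstract) subgroup of `G`. -/
def IsSubgroupOf (H G : Set (Mat k n)) : Prop :=
  H ⊆ G ∧ (1 : Mat k n) ∈ H ∧ (∀ a ∈ H, ∀ b ∈ H, a * b ∈ H) ∧
    ∀ a ∈ H, ∃ b ∈ H, a * b = 1 ∧ b * a = 1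

/-- `Y` is closed in `X` (for the Zariski topology). -/
def IsClosedIn (Y X : Set (Mat k n)) : Prop :=
  Y ⊆ X ∧ ∃ C : Set (Mat k n), ZClosed C ∧ Y = C ∩ X

/-- `X` is irreducible: nonempty, and its vanishing ideal is prime. -/
def IrreducibleSet (X : Set (Mat k n)) : Prop :=
  X.Nonempty ∧ ∀ p q : MPoly k n, VanishesOn X (p * q) → VanishesOn X p ∨ VanishesOn X q

/-- The action of `H` on `M` by left multiplication is observable: every nonzero
`H`-stable ideal of `k[M]` (presented as an ideal of the polynomial ring containing
the vanishing ideal of `M`) contains a nonzero `H`-invariant function.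
Here `H` acts on `k[M]` by `(f · h)(m) = f (h * m)`. -/
def LeftObservable (H M : Set (Mat k n)) : Prop :=
  ∀ J : Ideal (MPoly k n),
    (∀ p : MPoly k n, VanishesOn M p → p ∈ J) →
    (∀ p ∈ J, ∀ h ∈ H, ∃ p' ∈ J, ∀ m ∈ M, mEval m p' = mEval (h * m) p) →
    (∃ p ∈ J, ¬ VanishesOn M p) →
    ∃ p ∈ J, (¬ VanishesOn M p) ∧ ∀ h ∈ H, ∀ m ∈ M, mEval (h * m) p = mEval m p

/-- `χ` defines a character of (the monoid) `X`, i.e. a regular multiplicative map to `k`. -/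
structure IsCharacterOn (X : Set (Mat k n)) (χ : MPoly k n) : Prop where
  map_one : mEval 1 χ = 1
  map_mul : ∀ a ∈ X, ∀ b ∈ X, mEval (a * b) χ = mEval a χ * mEval b χ

/-- The character `χ` of `H` is extendible to `M`: there is a nonzero
`H`-semiinvariant `f ∈ k[M]` of weight `χ`, i.e. `f(h m) = χ(h) f(m)`. -/
def Extendible (M H : Set (Mat k n)) (χ : MPoly k n) : Prop :=
  ∃ f : MPoly k n, (¬ VanishesOn M f) ∧
    ∀ h ∈ H, ∀ m ∈ M, mEval (h * m) f = mEval h χ * mEval m f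

/-- The matrix of regular functions `P` evaluated at `x`: a rational representation. -/
noncomputable def repApply {d : ℕ} (P : Matrix (Fin d) (Fin d) (MPoly k n)) (x : Mat k n) :
    Matrix (Fin d) (Fin d) k :=
  Matrix.of fun i j => mEval x (P i j)

/-- `P` defines a (finite dimensional rational) right `M`-module structure on `k^d`,
the action being `v · x = v ᵥ* (P x)`. -/
def IsRightRep {d : ℕ} (M : Set (Mat k n)) (P : Matrix (Fin d) (Fin d) (MPoly k n)) : Prop :=
  repApply P 1 = 1 ∧ ∀ a ∈ M, ∀ b ∈ M, repApply P (a * b) = repApply P a * repApply P b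

end AlgebraicMonoid

/-!
Let `H` act on `k[M]` by left translation, `(h · p)(x) = p(h x)`. The functions
`x ↦ γ(h x) - γ(h) γ(x)`, `h ∈ H`, span an `H`-stable subspace `U`, finite dimensional
because all translates of `γ` lie in the span of finitely many monomials; modulo `U`,
`γ` spans an `H`-stable line on which `h` acts by `γ(h)`. For a linearly independent
family `bᵢ` with biorthogonal functionals `cⱼ`, the function `a ↦ det (cⱼ (a · bᵢ))` is `1`
at the identity and semiinvariant of weight `det B` under every `h` acting on the family by
the matrix `B`. Hence the determinants built from `U` and from `U ⊕ kγ` are semiinvariants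
of weights `ρ` and `γρ`, where `ρ(h) = det(h|U)`; both take the value `1` at the identity,
so they are nonzero on `M`.
-/

theorem LinearIndependent.exists_biorthogonal {K V ι : Type*} [Field K] [AddCommGroup V]
    [Module K V] [DecidableEq ι] {v : ι → V} (hv : LinearIndependent K v) :
    ∃ c : ι → V →ₗ[K] K, ∀ i j, c j (v i) = if i = j then 1 else 0 := by
  obtain ⟨g, hg⟩ := LinearMap.exists_extend hv.repr
  refine ⟨fun j => (Finsupp.lapply j).comp g, fun i j => ?_⟩
  have hgi := LinearMap.congr_fun hg ⟨v i, Submodule.subset_span (Set.mem_range_self i)⟩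
  simp only [LinearMap.comp_apply, Submodule.subtype_apply] at hgi
  simp [hgi, hv.repr_eq_single i, Finsupp.single_apply]

namespace AlgebraicMonoid

variable {k : Type} [Field k] {n : ℕ}

noncomputable def evalAt (x : Mat k n) : MPoly k n →ₐ[k] k :=
  aeval fun ij => x ij.1 ij.2

theorem evalAt_apply (x : Mat k n) (p : MPoly k n) : evalAt x p = mEval x p := by
  rw [mEval, ← coe_aeval_eq_eval]
  rfl

theorem mEval_mul (x : Mat k n) (p q : MPoly k n) :
    mEval x (p * q) = mEval x p * mEval x q := by
  simp only [← evalAt_apply, map_mul]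

section LeftTranslate

noncomputable def leftTranslate (a : Mat k n) : MPoly k n →ₐ[k] MPoly k n :=
  aeval fun ij => ∑ l, C (a ij.1 l) * X (l, ij.2)

theorem mEval_leftTranslate (a x : Mat k n) (p : MPoly k n) :
    mEval x (leftTranslate a p) = mEval (a * x) p := by
  simp only [← evalAt_apply, leftTranslate, evalAt, comp_aeval_apply]
  congr 2
  funext ij
  simp [Matrix.mul_apply]

theorem leftTranslate_leftTranslate (a b : Mat k n) (p : MPoly k n) :
    leftTranslate a (leftTranslate b p) = leftTranslate (b * a) p := by
  have hcomp : (leftTranslate a).comp (leftTranslate b) = leftTranslate (b * a) := by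
    refine algHom_ext fun ij => ?_
    simp only [AlgHom.comp_apply, leftTranslate, aeval_X, map_sum, map_mul, aeval_C,
      algebraMap_eq, Matrix.mul_apply, Finset.mul_sum, Finset.sum_mul, mul_assoc]
    exact Finset.sum_comm
  exact AlgHom.congr_fun hcomp p

theorem leftTranslate_one (p : MPoly k n) : leftTranslate (1 : Mat k n) p = p := by
  have hid : leftTranslate (1 : Mat k n) = AlgHom.id k _ :=
    algHom_ext fun ij => by simp [leftTranslate, Matrix.one_apply]
  rw [hid, AlgHom.id_apply]

/-- Left translation by the matrix of indeterminates, with coefficients in a second copy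
of `k[Mat]`. -/
noncomputable def genericLeftTranslate :
    MPoly k n →ₐ[k] MvPolynomial (Fin n × Fin n) (MPoly k n) :=
  aeval fun ij => ∑ l, C (X (ij.1, l)) * X (l, ij.2)

theorem map_genericLeftTranslate (a : Mat k n) (p : MPoly k n) :
    map (eval fun ij : Fin n × Fin n => a ij.1 ij.2) (genericLeftTranslate p) =
      leftTranslate a p := by
  have hcomp : (map (eval fun ij : Fin n × Fin n => a ij.1 ij.2)).comp
      (genericLeftTranslate (k := k) (n := n)).toRingHom = (leftTranslate a).toRingHom := by
    refine ringHom_ext (fun r => ?_) fun ij => ?_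
    · simp [genericLeftTranslate, leftTranslate, algebraMap_eq]
    · simp [genericLeftTranslate, leftTranslate, map_sum]
  exact RingHom.congr_fun hcomp p

theorem leftTranslate_eq_sum (a : Mat k n) (p : MPoly k n) :
    leftTranslate a p = ∑ μ ∈ (genericLeftTranslate p).support,
      mEval a (coeff μ (genericLeftTranslate p)) • monomial μ (1 : k) := by
  rw [← map_genericLeftTranslate]
  conv_lhs => rw [(genericLeftTranslate p).as_sum, map_sum]
  refine Finset.sum_congr rfl fun μ _ => ?_
  rw [map_monomial, smul_monomial, smul_eq_mul, mul_one]
  rfl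

noncomputable def translateSpan (p : MPoly k n) : Submodule k (MPoly k n) :=
  Submodule.span k ((fun μ => monomial μ (1 : k)) '' (genericLeftTranslate p).support)

instance (p : MPoly k n) : FiniteDimensional k (translateSpan p) :=
  FiniteDimensional.span_of_finite k ((genericLeftTranslate p).support.finite_toSet.image _)

theorem leftTranslate_mem_translateSpan (a : Mat k n) (p : MPoly k n) :
    leftTranslate a p ∈ translateSpan p := by
  rw [leftTranslate_eq_sum]
  exact Submodule.sum_mem _ fun μ hμ =>
    Submodule.smul_mem _ _ (Submodule.subset_span ⟨μ, hμ, rfl⟩)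

theorem exists_mEval_eq_apply_leftTranslate (c : MPoly k n →ₗ[k] k) (p : MPoly k n) :
    ∃ F : MPoly k n, ∀ a : Mat k n, mEval a F = c (leftTranslate a p) := by
  refine ⟨∑ μ ∈ (genericLeftTranslate p).support,
    c (monomial μ 1) • coeff μ (genericLeftTranslate p), fun a => ?_⟩
  simp only [leftTranslate_eq_sum, map_sum, map_smul, ← evalAt_apply, smul_eq_mul, mul_comm]

end LeftTranslate

theorem exists_det_semiinvariant {ι : Type} [Fintype ι] [DecidableEq ι] {b : ι → MPoly k n}
    (hb : LinearIndependent k b) :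
    ∃ f : MPoly k n, mEval 1 f = 1 ∧
      ∀ (h : Mat k n) (B : Matrix ι ι k),
        (∀ i, leftTranslate h (b i) = ∑ s, B i s • b s) →
        ∀ m : Mat k n, mEval (h * m) f = B.det * mEval m f := by
  obtain ⟨c, hc⟩ := hb.exists_biorthogonal
  choose F hF using fun i j => exists_mEval_eq_apply_leftTranslate (c j) (b i)
  have hdet : ∀ a : Mat k n,
      mEval a (Matrix.of F).det = (Matrix.of fun i j => c j (leftTranslate a (b i))).det := by
    intro a
    rw [← evalAt_apply, AlgHom.map_det]
    congr 1
    ext i j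
    exact (evalAt_apply a _).trans (hF i j a)
  refine ⟨(Matrix.of F).det, ?_, fun h B hB m => ?_⟩
  · rw [hdet, ← Matrix.det_one (n := ι) (R := k)]
    congr 1
    ext i j
    rw [Matrix.of_apply, leftTranslate_one, hc, Matrix.one_apply]
  · have hmul : (Matrix.of fun i j => c j (leftTranslate (h * m) (b i))) =
        B * Matrix.of fun i j => c j (leftTranslate m (b i)) := by
      ext i j
      simp only [Matrix.of_apply, Matrix.mul_apply, ← leftTranslate_leftTranslate, hB, map_sum,
        map_smul, smul_eq_mul]
    rw [hdet, hdet, hmul, Matrix.det_mul]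

section Character

variable (H : Set (Mat k n)) (γ : MPoly k n)

noncomputable def defectSpan : Submodule k (MPoly k n) :=
  Submodule.span k ((fun h => leftTranslate h γ - mEval h γ • γ) '' H)

variable {H γ}

theorem leftTranslate_sub_mem_defectSpan {h : Mat k n} (hh : h ∈ H) :
    leftTranslate h γ - mEval h γ • γ ∈ defectSpan H γ :=
  Submodule.subset_span ⟨h, hh, rfl⟩

theorem defectSpan_le_translateSpan : defectSpan H γ ≤ translateSpan γ := by
  refine Submodule.span_le.2 ?_
  rintro - ⟨h, -, rfl⟩
  refine Submodule.sub_mem _ (leftTranslate_mem_translateSpan h γ) (Submodule.smul_mem _ _ ?_)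
  simpa only [leftTranslate_one] using leftTranslate_mem_translateSpan 1 γ

instance : FiniteDimensional k (defectSpan H γ) :=
  Submodule.finiteDimensional_of_le defectSpan_le_translateSpan

theorem leftTranslate_mem_defectSpan (hH : ∀ a ∈ H, ∀ b ∈ H, a * b ∈ H)
    (hγ : IsCharacterOn H γ) {h : Mat k n} (hh : h ∈ H) {u : MPoly k n}
    (hu : u ∈ defectSpan H γ) : leftTranslate h u ∈ defectSpan H γ := by
  suffices defectSpan H γ ≤ (defectSpan H γ).comap (leftTranslate h).toLinearMap from this hu
  refine Submodule.span_le.2 ?_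
  rintro - ⟨h', hh', rfl⟩
  have hexpand : leftTranslate h (leftTranslate h' γ - mEval h' γ • γ) =
      (leftTranslate (h' * h) γ - mEval (h' * h) γ • γ) -
        mEval h' γ • (leftTranslate h γ - mEval h γ • γ) := by
    rw [map_sub, map_smul, leftTranslate_leftTranslate, hγ.map_mul h' hh' h hh, smul_sub,
      smul_smul]
    abel
  simp only [SetLike.mem_coe, Submodule.mem_comap, AlgHom.toLinearMap_apply, hexpand]
  exact Submodule.sub_mem _ (leftTranslate_sub_mem_defectSpan (hH h' hh' h hh))
    (Submodule.smul_mem _ _ (leftTranslate_sub_mem_defectSpan hh))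

theorem notMem_defectSpan (hγ1 : mEval 1 γ = 1) : γ ∉ defectSpan H γ := by
  have hker : defectSpan H γ ≤ LinearMap.ker (evalAt (1 : Mat k n)).toLinearMap := by
    refine Submodule.span_le.2 ?_
    rintro - ⟨h, -, rfl⟩
    simp only [SetLike.mem_coe, LinearMap.mem_ker, AlgHom.toLinearMap_apply, map_sub, map_smul,
      evalAt_apply, mEval_leftTranslate, mul_one, hγ1, smul_eq_mul, sub_self]
  intro hmem
  simpa [evalAt_apply, hγ1] using hker hmem

theorem exists_semiinvariant_pair (U : Submodule k (MPoly k n)) [FiniteDimensional k U]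
    (hU : ∀ h ∈ H, ∀ u ∈ U, leftTranslate h u ∈ U) (hγU : γ ∉ U)
    (hγ : ∀ h ∈ H, leftTranslate h γ - mEval h γ • γ ∈ U) :
    ∃ f₀ f₁ : MPoly k n, mEval 1 f₀ = 1 ∧ mEval 1 f₁ = 1 ∧
      ∀ h ∈ H, ∀ m : Mat k n,
        mEval (h * m) f₀ = mEval h f₀ * mEval m f₀ ∧
          mEval (h * m) f₁ = mEval h γ * mEval h f₀ * mEval m f₁ := by
  set e := Module.finBasis k U
  set b : Fin (Module.finrank k U) → MPoly k n := fun i => e i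
  have hb : LinearIndependent k b := e.linearIndependent.map' U.subtype U.ker_subtype
  have hγb : LinearIndependent k (Sum.elim (fun _ : Unit => γ) b) := by
    have hγ0 : γ ≠ 0 := fun h0 => hγU (h0 ▸ U.zero_mem)
    refine (linearIndependent_unique_iff.2 hγ0).sum_type hb ?_
    rw [Set.range_const]
    refine ((Submodule.disjoint_span_singleton' hγ0).2 hγU).symm.mono_right ?_
    exact Submodule.span_le.2 (Set.range_subset_iff.2 fun i => (e i).2)
  have hcoord : ∀ u (hu : u ∈ U), u = ∑ s, e.repr ⟨u, hu⟩ s • b s := fun u hu => by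
    simp only [b, ← Submodule.coe_smul, ← Submodule.coe_sum, e.sum_repr]
  obtain ⟨f₀, hf₀1, hf₀⟩ := exists_det_semiinvariant hb
  obtain ⟨f₁, hf₁1, hf₁⟩ := exists_det_semiinvariant hγb
  refine ⟨f₀, f₁, hf₀1, hf₁1, fun h hh m => ?_⟩
  set B : Matrix _ _ k := Matrix.of fun i s => e.repr ⟨_, hU h hh _ (e i).2⟩ s
  set v : Unit → Fin (Module.finrank k U) → k := fun _ s => e.repr ⟨_, hγ h hh⟩ s
  have hB : ∀ i, leftTranslate h (b i) = ∑ s, B i s • b s := fun i => hcoord _ _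
  have hBγ : ∀ i, leftTranslate h (Sum.elim (fun _ : Unit => γ) b i) =
      ∑ s, Matrix.fromBlocks (Matrix.of fun _ _ => mEval h γ) (Matrix.of v) 0 B i s •
        Sum.elim (fun _ : Unit => γ) b s := by
    rintro (i | i)
    · simp only [Sum.elim_inl, Fintype.sum_sum_type, Matrix.fromBlocks_apply₁₁,
        Matrix.fromBlocks_apply₁₂, Matrix.of_apply, Sum.elim_inr, Fintype.sum_unique, v,
        ← hcoord]
      abel
    · simp [Fintype.sum_sum_type, hB]
  have hf₀h : mEval h f₀ = B.det := by simpa [hf₀1] using hf₀ h B hB 1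
  rw [hf₀h, hf₀ h B hB m, hf₁ h _ hBγ m, Matrix.det_fromBlocks_zero₂₁,
    Matrix.det_unique (Matrix.of fun _ _ : Unit => mEval h γ)]
  exact ⟨rfl, rfl⟩

end Character

theorem exists_extendible_multiplier_general
    {k : Type} [Field k] {n : ℕ}
    (M H : Set (Mat k n)) (hM : IsAlgMonoid M)
    (hH : IsSubgroupOf H (unitGroup M))
    (γ : MPoly k n) (hγ : IsCharacterOn H γ) :
    ∃ ρ : MPoly k n, IsCharacterOn H ρ ∧ Extendible M H ρ ∧ Extendible M H (γ * ρ) := by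
  obtain ⟨-, -, hHmul, -⟩ := hH
  obtain ⟨f₀, f₁, hf₀1, hf₁1, hf⟩ := exists_semiinvariant_pair (defectSpan H γ)
    (fun _ hh _ hu => leftTranslate_mem_defectSpan hHmul hγ hh hu)
    (notMem_defectSpan hγ.map_one) (fun _ hh => leftTranslate_sub_mem_defectSpan hh)
  have hne : ∀ f : MPoly k n, mEval 1 f = 1 → ¬ VanishesOn M f := fun f hf1 hv =>
    one_ne_zero (hf1 ▸ hv 1 hM.one_mem)
  refine ⟨f₀, ⟨hf₀1, fun a ha b _ => (hf a ha b).1⟩,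
    ⟨f₀, hne f₀ hf₀1, fun h hh m _ => (hf h hh m).1⟩,
    ⟨f₁, hne f₁ hf₁1, fun h hh m _ => ?_⟩⟩
  rw [(hf h hh m).2, mEval_mul]

/-- Let `M` be an affine algebraic monoid with unit group `G` and
`H ⊆ G` a subgroup, closed in `M`.  For every character `γ ∈ X(H)` there exists an
extendible character `ρ ∈ E_M(H)` such that `γρ ∈ E_M(H)` as well. -/
theorem exists_extendible_multiplier
    {k : Type} [Field k] [IsAlgClosed k] {n : ℕ}
    (M H : Set (Mat k n)) (hM : IsAlgMonoid M)
    (hH : IsSubgroupOf H (unitGroup M)) (hHcl : IsClosedIn H M)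
    (γ : MPoly k n) (hγ : IsCharacterOn H γ) :
    ∃ ρ : MPoly k n, IsCharacterOn H ρ ∧ Extendible M H ρ ∧ Extendible M H (γ * ρ) :=
  exists_extendible_multiplier_general M H hM hH γ hγ

end AlgebraicMonoid
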